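/- arXiv:1005.3402 — 3 statements merged into one kernel-verified Lean document; each statement's English description precedes it below -/
import Mathlib

section
/- For the map φ(x,y) = ((sin x · √(m+n)/√(2m+n)) e^{iπ m y}, (cos x · √(m+n)/√(m+2n)) e^{iπ n y}, √(n cos²x/(m+2n) + m sin²x/(2m+n)) e^{-iπ(m+n)y}), the Hermitian product ⟨φ, ∂φ/∂x⟩ vanishes identically. -/
/-! Each component of `φ(·, y)` is a real profile `r_j(x)` times a unimodular phase independent
of `x`, so `φ_j · conj (∂φ_j/∂x) = r_j r_j'` is real, and the sum is `½ (∑ r_j²)'`. The profiles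
satisfy `∑ r_j² = 1` identically, because the coefficients of `sin² x` and of `cos² x` both add
up to `1`. -/

noncomputable def conePhi (m n : ℕ) (x y : ℝ) : Fin 3 → ℂ :=
  ![((Real.sin x * Real.sqrt ((m : ℝ) + n) / Real.sqrt (2 * (m : ℝ) + n) : ℝ) : ℂ) *
      Complex.exp (Complex.I * Real.pi * m * y),
    ((Real.cos x * Real.sqrt ((m : ℝ) + n) / Real.sqrt ((m : ℝ) + 2 * n) : ℝ) : ℂ) *
      Complex.exp (Complex.I * Real.pi * n * y),
    ((Real.sqrt ((n : ℝ) * Real.cos x ^ 2 / ((m : ℝ) + 2 * n) +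
        (m : ℝ) * Real.sin x ^ 2 / (2 * (m : ℝ) + n)) : ℝ) : ℂ) *
      Complex.exp (-(Complex.I * Real.pi * ((m : ℝ) + n) * y))]

open Real ComplexConjugate

theorem sum_mul_deriv_eq_zero_of_sum_sq_const {ι : Type*} {s : Finset ι} {f : ι → ℝ → ℝ}
    {x C : ℝ} (hf : ∀ i ∈ s, DifferentiableAt ℝ (f i) x) (hC : ∀ t, ∑ i ∈ s, f i t ^ 2 = C) :
    ∑ i ∈ s, f i x * deriv (f i) x = 0 := by
  have hsum : HasDerivAt (fun t => ∑ i ∈ s, f i t ^ 2)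
      (2 * ∑ i ∈ s, f i x * deriv (f i) x) x := by
    rw [Finset.mul_sum]
    exact HasDerivAt.fun_sum fun i hi => ((hf i hi).hasDerivAt.pow 2).congr_deriv (by ring)
  simp only [hC] at hsum
  simpa using hsum.unique (hasDerivAt_const x C)

theorem Complex.ofReal_mul_mul_conj_deriv {f : ℝ → ℝ} {x : ℝ} {c : ℂ}
    (hf : DifferentiableAt ℝ f x) (hc : ‖c‖ = 1) :
    (f x : ℂ) * c * conj (deriv (fun t => (f t : ℂ) * c) x) = (f x * deriv f x : ℝ) := by
  rw [(hf.hasDerivAt.ofReal_comp.mul_const c).deriv, map_mul, Complex.conj_ofReal,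
    mul_mul_mul_comm, Complex.mul_conj', hc]
  push_cast
  ring

noncomputable def coneRadius (m n : ℝ) : Fin 3 → ℝ → ℝ :=
  ![fun t => sin t * √(m + n) / √(2 * m + n),
    fun t => cos t * √(m + n) / √(m + 2 * n),
    fun t => √(n * cos t ^ 2 / (m + 2 * n) + m * sin t ^ 2 / (2 * m + n))]

noncomputable def conePhase (m n y : ℝ) : Fin 3 → ℂ :=
  ![Complex.exp (Complex.I * π * m * y), Complex.exp (Complex.I * π * n * y),
    Complex.exp (-(Complex.I * π * (m + n) * y))]

theorem conePhi_eq (m n : ℕ) (x y : ℝ) (j : Fin 3) :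
    conePhi m n x y j = (coneRadius m n j x : ℂ) * conePhase m n y j := by
  fin_cases j <;> simp [conePhi, coneRadius, conePhase]

theorem norm_conePhase (m n y : ℝ) (j : Fin 3) : ‖conePhase m n y j‖ = 1 := by
  fin_cases j <;> simp [conePhase, Complex.norm_exp]

theorem cone_radicand_pos {m n : ℝ} (hm : 0 < m) (hn : 0 < n) (t : ℝ) :
    0 < n * cos t ^ 2 / (m + 2 * n) + m * sin t ^ 2 / (2 * m + n) := by
  rcases eq_or_ne (cos t) 0 with hcos | hcos
  · have hsin : sin t ^ 2 = 1 := by nlinarith [sin_sq_add_cos_sq t]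
    simp only [hcos, hsin]
    positivity
  · have : 0 < n * cos t ^ 2 / (m + 2 * n) := by positivity
    positivity

theorem differentiableAt_coneRadius {m n : ℝ} (hm : 0 < m) (hn : 0 < n) (j : Fin 3) (x : ℝ) :
    DifferentiableAt ℝ (coneRadius m n j) x := by
  fin_cases j
  · simp only [coneRadius, Fin.zero_eta, Matrix.cons_val_zero]
    fun_prop
  · simp only [coneRadius, Fin.mk_one, Matrix.cons_val_one, Matrix.cons_val_zero]
    fun_prop
  · exact (by fun_prop : DifferentiableAt ℝ _ x).sqrt (cone_radicand_pos hm hn x).ne'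

theorem sum_sq_coneRadius {m n : ℝ} (hm : 0 < m) (hn : 0 < n) (t : ℝ) :
    ∑ j, coneRadius m n j t ^ 2 = 1 := by
  simp only [Fin.sum_univ_three, coneRadius, Matrix.cons_val_zero, Matrix.cons_val_one,
    Matrix.cons_val_two, Matrix.head_cons, Matrix.tail_cons]
  rw [div_pow, div_pow, mul_pow, mul_pow, sq_sqrt (by positivity), sq_sqrt (by positivity),
    sq_sqrt (by positivity), sq_sqrt (by positivity)]
  field_simp
  linear_combination (2 * m + n) * (m + 2 * n) * sin_sq_add_cos_sq t

/-- `⟨φ, ∂φ/∂x⟩ = 0` identically. -/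
theorem stmt_1 (m n : ℕ) (hm : 0 < m) (hn : 0 < n) (x y : ℝ) :
    ∑ j : Fin 3, conePhi m n x y j *
      (starRingEnd ℂ) (deriv (fun t : ℝ => conePhi m n t y j) x) = 0 := by
  have hm' : (0 : ℝ) < m := Nat.cast_pos.mpr hm
  have hn' : (0 : ℝ) < n := Nat.cast_pos.mpr hn
  have hr := differentiableAt_coneRadius hm' hn'
  simp_rw [conePhi_eq]
  rw [Finset.sum_congr rfl fun j _ =>
    Complex.ofReal_mul_mul_conj_deriv (hr j x) (norm_conePhase m n y j)]
  exact_mod_cast sum_mul_deriv_eq_zero_of_sum_sq_const (fun j _ => hr j x)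
    (sum_sq_coneRadius hm' hn')
end

section
/- For the map φ(x,y) = ((sin x · √(m+n)/√(2m+n)) e^{iπ m y}, (cos x · √(m+n)/√(m+2n)) e^{iπ n y}, √(n cos²x/(m+2n) + m sin²x/(2m+n)) e^{-iπ(m+n)y}), the Hermitian product ⟨φ, ∂φ/∂y⟩ vanishes identically. -/
/-! Each component of `conePhi m n x` is `c e^{a y}` with `c` real and `a` purely imaginary
(`a = iπm`, `iπn`, `-iπ(m+n)`), so it contributes `-a c²` to `⟨φ, ∂φ/∂y⟩`. The three
contributions cancel because the squared amplitudes balance the frequencies: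
`m c₁² + n c₂² = (m+n) c₃²`. -/

open Complex ComplexConjugate

lemma deriv_ofReal_mul_cexp_mul (c : ℝ) (a : ℂ) (y : ℝ) :
    deriv (fun t : ℝ => (c : ℂ) * exp (a * t)) y = a * (c * exp (a * y)) := by
  have h := ((hasDerivAt_id (y : ℂ)).const_mul a).cexp.const_mul (c : ℂ) |>.comp_ofReal
  simp only [id, mul_one] at h
  rw [h.deriv]
  ring

lemma ofReal_mul_cexp_mul_conj_deriv {a : ℂ} (ha : conj a = -a) (c y : ℝ) :
    (c * exp (a * y)) * conj (deriv (fun t : ℝ => (c : ℂ) * exp (a * t)) y) = -(a * c ^ 2) := by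
  rw [deriv_ofReal_mul_cexp_mul, map_mul, map_mul, ← exp_conj, map_mul, ha, conj_ofReal,
    conj_ofReal, neg_mul, neg_mul, exp_neg]
  field_simp [exp_ne_zero]

lemma cone_frequency_balance (m n x : ℝ) (hm : 0 ≤ m) (hn : 0 ≤ n) :
    m * (Real.sin x * √(m + n) / √(2 * m + n)) ^ 2
      + n * (Real.cos x * √(m + n) / √(m + 2 * n)) ^ 2
      - (m + n) * √(n * Real.cos x ^ 2 / (m + 2 * n) + m * Real.sin x ^ 2 / (2 * m + n)) ^ 2
      = 0 := by
  rw [div_pow, div_pow, mul_pow, mul_pow, Real.sq_sqrt (by positivity),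
    Real.sq_sqrt (by positivity), Real.sq_sqrt (by positivity), Real.sq_sqrt (by positivity)]
  ring

theorem stmt_2_general (m n : ℕ) (x y : ℝ) :
    ∑ j : Fin 3, conePhi m n x y j *
      (starRingEnd ℂ) (deriv (fun t : ℝ => conePhi m n x t j) y) = 0 := by
  simp only [Fin.sum_univ_three, conePhi, Matrix.cons_val, ← neg_mul]
  rw [ofReal_mul_cexp_mul_conj_deriv (by simp), ofReal_mul_cexp_mul_conj_deriv (by simp),
    ofReal_mul_cexp_mul_conj_deriv (by simp)]
  have h := congrArg ((↑) : ℝ → ℂ) (cone_frequency_balance m n x m.cast_nonneg n.cast_nonneg)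
  push_cast at h ⊢
  linear_combination (-(I * Real.pi)) * h

/-- `⟨φ, ∂φ/∂y⟩ = 0` identically. -/
theorem stmt_2 (m n : ℕ) (hm : 0 < m) (hn : 0 < n) (x y : ℝ) :
    ∑ j : Fin 3, conePhi m n x y j *
      (starRingEnd ℂ) (deriv (fun t : ℝ => conePhi m n x t j) y) = 0 :=
  stmt_2_general m n x y
end

section
/- Let Ω₂ = c₁(z² − γ²) dz / ((z−Q₁)(z−Q₂)(z−Q₃)(z²−b²)) with b, Q₁, Q₂, Q₃, a real, γ purely imaginary, all poles simple. The regularity conditions Res_a Ω₁ + Res_b Ω₂ = 0 and Res_{−a} Ω₁ + Res_{−b} Ω₂ = 0, where Ω₁ = dz/(z(z²−a²)), force c₁ = −b(b−Q₁)(b−Q₂)(b−Q₃)/(a²(b²−γ²)) and Q₃ = −b²(Q₁+Q₂)/(b² + Q₁Q₂). -/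
/-!
Both residues of `Ω₁` at `±a` equal `1 / (2a²)`, so the two gluing conditions say that `Ω₂` has the
same nonzero residue at `b` and at `-b`. With `P z = (z - Q₁)(z - Q₂)(z - Q₃)` this is
`2b P(b) = -2b P(-b)`, i.e. the even part `-(Q₁ + Q₂ + Q₃) b² - Q₁Q₂Q₃` of `P` vanishes at `b`, which is
the formula for `Q₃`; the formula for `c₁` is either condition solved for `c₁`. Since `1 / (2a²) ≠ 0`,
each condition also forces its own numerator and denominator to be nonzero (with `x / 0 = 0`, a zero
one would make the quotient vanish).
-/

section Field

variable {K : Type*} [Field K]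

theorem ne_zero_and_ne_zero_of_add_div_eq_zero {u x y : K} (hu : u ≠ 0) (h : u + x / y = 0) :
    x ≠ 0 ∧ y ≠ 0 := by
  constructor <;> rintro rfl <;> simp_all

theorem gluing_relation_of_residues_eq [NeZero (2 : K)] {c b Q₁ Q₂ Q₃ : K}
    (hc : c ≠ 0) (hb : b ≠ 0)
    (h : c / ((b - Q₁) * (b - Q₂) * (b - Q₃) * (2 * b)) =
      c / ((-b - Q₁) * (-b - Q₂) * (-b - Q₃) * (-(2 * b)))) :
    Q₃ * (b ^ 2 + Q₁ * Q₂) + b ^ 2 * (Q₁ + Q₂) = 0 := by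
  rw [div_eq_mul_inv, div_eq_mul_inv, mul_right_inj' hc, inv_inj] at h
  have h4b : (2 * 2 : K) * b ≠ 0 := mul_ne_zero (mul_ne_zero two_ne_zero two_ne_zero) hb
  refine (mul_eq_zero.mp ?_).resolve_left h4b
  linear_combination -h

theorem eq_div_of_gluing_relation {b Q₁ Q₂ Q₃ : K} (hb : b ≠ 0)
    (hQ₁ : b - Q₁ ≠ 0) (hQ₂ : b - Q₂ ≠ 0)
    (h : Q₃ * (b ^ 2 + Q₁ * Q₂) + b ^ 2 * (Q₁ + Q₂) = 0) :
    Q₃ = -b ^ 2 * (Q₁ + Q₂) / (b ^ 2 + Q₁ * Q₂) := by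
  -- otherwise `Q₁ + Q₂ = 0`, and then `(b - Q₁) * (b - Q₂) = b ^ 2 + Q₁ * Q₂ - b * (Q₁ + Q₂) = 0`
  have hQQ : b ^ 2 + Q₁ * Q₂ ≠ 0 := by
    intro hQQ
    have hsum : Q₁ + Q₂ = 0 := by simpa [hQQ, hb] using h
    exact mul_ne_zero hQ₁ hQ₂ (by linear_combination hQQ - b * hsum)
  rw [eq_div_iff hQQ]
  linear_combination h

end Field

theorem stmt_10_general (a b Q₁ Q₂ Q₃ : ℝ) (γ c₁ : ℂ)
    (ha : a ≠ 0)
    (hres_b : 1 / (2 * (a : ℂ) ^ 2) +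
      c₁ * ((b : ℂ) ^ 2 - γ ^ 2) /
        (((b : ℂ) - Q₁) * ((b : ℂ) - Q₂) * ((b : ℂ) - Q₃) * (2 * (b : ℂ))) = 0)
    (hres_nb : 1 / (2 * (a : ℂ) ^ 2) +
      c₁ * ((b : ℂ) ^ 2 - γ ^ 2) /
        ((-(b : ℂ) - Q₁) * (-(b : ℂ) - Q₂) * (-(b : ℂ) - Q₃) * (-(2 * (b : ℂ)))) = 0) :
    c₁ = -(b : ℂ) * ((b : ℂ) - Q₁) * ((b : ℂ) - Q₂) * ((b : ℂ) - Q₃) /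
        ((a : ℂ) ^ 2 * ((b : ℂ) ^ 2 - γ ^ 2)) ∧
    (Q₃ : ℂ) = -(b : ℂ) ^ 2 * ((Q₁ : ℂ) + Q₂) / ((b : ℂ) ^ 2 + (Q₁ : ℂ) * Q₂) := by
  have ha' : (a : ℂ) ≠ 0 := Complex.ofReal_ne_zero.mpr ha
  have hr : 1 / (2 * (a : ℂ) ^ 2) ≠ 0 := by simp [ha']
  obtain ⟨hx, hD⟩ := ne_zero_and_ne_zero_of_add_div_eq_zero hr hres_b
  obtain ⟨-, hbγ⟩ := mul_ne_zero_iff.mp hx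
  simp only [mul_ne_zero_iff] at hD
  obtain ⟨⟨⟨hQ₁, hQ₂⟩, hQ₃⟩, -, hb⟩ := hD
  have hglue := gluing_relation_of_residues_eq hx hb (add_left_cancel (hres_b.trans hres_nb.symm))
  refine ⟨?_, eq_div_of_gluing_relation hb hQ₁ hQ₂ hglue⟩
  rw [eq_div_iff (mul_ne_zero (pow_ne_zero 2 ha') hbγ)]
  field_simp at hres_b
  linear_combination hres_b

/-- the regularity (gluing) conditions
`Res_a Ω₁ + Res_b Ω₂ = 0` and `Res_{−a} Ω₁ + Res_{−b} Ω₂ = 0` force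
`c₁ = −b(b−Q₁)(b−Q₂)(b−Q₃)/(a²(b²−γ²))` and `Q₃ = −b²(Q₁+Q₂)/(b²+Q₁Q₂)`. -/
theorem stmt_10 (a b Q₁ Q₂ Q₃ : ℝ) (γ c₁ : ℂ) (hγ : γ.re = 0)
    (ha : a ≠ 0) (hb : b ≠ 0)
    (hbQ₁ : (b : ℂ) ≠ (Q₁ : ℂ)) (hbQ₂ : (b : ℂ) ≠ (Q₂ : ℂ)) (hbQ₃ : (b : ℂ) ≠ (Q₃ : ℂ))
    (hbQ₁' : -(b : ℂ) ≠ (Q₁ : ℂ)) (hbQ₂' : -(b : ℂ) ≠ (Q₂ : ℂ)) (hbQ₃' : -(b : ℂ) ≠ (Q₃ : ℂ))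
    (hbγ : (b : ℂ) ^ 2 - γ ^ 2 ≠ 0) (hQQ : (b : ℂ) ^ 2 + (Q₁ : ℂ) * (Q₂ : ℂ) ≠ 0)
    (hres_b : 1 / (2 * (a : ℂ) ^ 2) +
      c₁ * ((b : ℂ) ^ 2 - γ ^ 2) /
        (((b : ℂ) - Q₁) * ((b : ℂ) - Q₂) * ((b : ℂ) - Q₃) * (2 * (b : ℂ))) = 0)
    (hres_nb : 1 / (2 * (a : ℂ) ^ 2) +
      c₁ * ((b : ℂ) ^ 2 - γ ^ 2) /
        ((-(b : ℂ) - Q₁) * (-(b : ℂ) - Q₂) * (-(b : ℂ) - Q₃) * (-(2 * (b : ℂ)))) = 0) :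
    c₁ = -(b : ℂ) * ((b : ℂ) - Q₁) * ((b : ℂ) - Q₂) * ((b : ℂ) - Q₃) /
        ((a : ℂ) ^ 2 * ((b : ℂ) ^ 2 - γ ^ 2)) ∧
    (Q₃ : ℂ) = -(b : ℂ) ^ 2 * ((Q₁ : ℂ) + Q₂) / ((b : ℂ) ^ 2 + (Q₁ : ℂ) * Q₂) :=
  stmt_10_general a b Q₁ Q₂ Q₃ γ c₁ ha hres_b hres_nb
end
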